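/- Let X and Y be Banach spaces and assume Y has Property 𝒬. If there exists a uniformly continuous map φ : B_X → Y, defined on the closed unit ball B_X of X, such that ρ̄_φ(t) > 0 for some t ∈ (0,1), then X has Property 𝒬. -/

import Mathlib

open Metric
open scoped ENNReal NNReal

/-- Exact compression modulus. -/
noncomputable def exactComp {M N : Type*} [PseudoMetricSpace M] [PseudoMetricSpace N]
    (f : M → N) (t : ℝ) : ℝ :=
  sInf {r : ℝ | ∃ x y : M, dist x y = t ∧ dist (f x) (f y) = r}

/-- Coarse map: the expansion modulus is finite for every t. -/
def Coarse {M N : Type*} [PseudoMetricSpace M] [PseudoMetricSpace N] (f : M → N) : Prop :=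
  ∀ t : ℝ, ∃ C : ℝ, ∀ x y : M, dist x y ≤ t → dist (f x) (f y) ≤ C

/-- Solvent map. -/
def Solvent {M N : Type*} [PseudoMetricSpace M] [PseudoMetricSpace N] (f : M → N) : Prop :=
  ∀ n : ℕ, ∃ R : ℝ, 0 < R ∧ ∀ x y : M,
    dist x y ∈ Set.Icc R (R + (n : ℝ)) → (n : ℝ) < dist (f x) (f y)

/-- Almost uncollapsed map. -/
noncomputable def AlmostUncollapsed {M N : Type*} [PseudoMetricSpace M] [PseudoMetricSpace N]
    (f : M → N) : Prop :=
  ∃ t : ℝ, 0 < t ∧ 0 < exactComp f t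

/-- Two strictly increasing k-tuples interlace:
n₁ ≤ m₁ ≤ n₂ ≤ … ≤ n_k ≤ m_k or m₁ ≤ n₁ ≤ m₂ ≤ … ≤ m_k ≤ n_k. -/
def Interlace {k : ℕ} (nb mb : Fin k → ℕ) : Prop :=
    ((∀ i, nb i ≤ mb i) ∧ ∀ i j : Fin k, (i : ℕ) + 1 = (j : ℕ) → mb i ≤ nb j) ∨
    ((∀ i, mb i ≤ nb i) ∧ ∀ i j : Fin k, (i : ℕ) + 1 = (j : ℕ) → nb i ≤ mb j)

/-- Property Q(ε,δ): elements of P_k(ℕ) are encoded as strictly increasing k-tuples. -/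
def PropertyQED (M : Type*) [PseudoMetricSpace M] (ε δ : ℝ) : Prop :=
  ∀ (k : ℕ) (f : (Fin k → ℕ) → M),
    (∀ nb mb : Fin k → ℕ, StrictMono nb → StrictMono mb → Interlace nb mb →
      dist (f nb) (f mb) ≤ δ) →
    ∃ 𝕄 : Set ℕ, 𝕄.Infinite ∧
      ∀ nb mb : Fin k → ℕ, StrictMono nb → StrictMono mb →
        (∀ i, nb i ∈ 𝕄) → (∀ i, mb i ∈ 𝕄) → (∀ i j : Fin k, nb i < mb j) →
        dist (f nb) (f mb) ≤ ε

/-- Property 𝒬 for a Banach space: Property Q(ε, cε) holds for every ε > 0, for some c > 0. -/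
def PropertyQ (M : Type*) [PseudoMetricSpace M] : Prop :=
  ∃ c : ℝ, 0 < c ∧ ∀ ε : ℝ, 0 < ε → PropertyQED M ε (c * ε)

/-!
Write `ρ = ρ̄_φ(t) > 0`. Dilating the ball of radius `R + 1` onto the ball of radius `t` and
applying `φ` gives, for every `a > 0` and `R` large, a map `g : X → Y` moving points of that ball
at distance `≤ 1` by at most `a`, but sending points at distance in `[R, R + 1]` more than `ρ / 2`
apart. Let `f : P_k(ℕ) → X` have interlacing distances `≤ 1`. Separated distances are then
`≤ k`, so by Ramsey's theorem their integer part is a constant `v` on an infinite set. If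
`v ≤ R` we are done; otherwise shrink `f` by `R / v` around a fixed tuple `b₀`: beyond `b₀`,
`g` composed with it has interlacing distances `≤ cρ / 2`, so Property `Q(ρ / 2, cρ / 2)` of `Y`
gives separated pairs whose images under it are within `ρ / 2`, although the shrunk pairs lie at
distance in `[R, R + 1]`. Thus `X` has `Q(R + 1, 1)`, hence Property `𝒬` by homogeneity.
-/

theorem Interlace.comp_monotone {k : ℕ} {nb mb : Fin k → ℕ} {e : ℕ → ℕ} (he : Monotone e)
    (h : Interlace nb mb) : Interlace (e ∘ nb) (e ∘ mb) := by
  rcases h with ⟨h₁, h₂⟩ | ⟨h₁, h₂⟩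
  · exact Or.inl ⟨fun i => he (h₁ i), fun i j hij => he (h₂ i j hij)⟩
  · exact Or.inr ⟨fun i => he (h₁ i), fun i j hij => he (h₂ i j hij)⟩

theorem StrictMono.exists_comp_eq_of_forall_mem_image {k : ℕ} {e : ℕ → ℕ} (he : StrictMono e)
    {T : Set ℕ} {nb : Fin k → ℕ} (hn : StrictMono nb) (hT : ∀ i, nb i ∈ e '' T) :
    ∃ pn : Fin k → ℕ, StrictMono pn ∧ (∀ i, pn i ∈ T) ∧ e ∘ pn = nb := by
  choose pn hpT hpe using hT
  refine ⟨pn, fun i j hij => he.lt_iff_lt.mp ?_, hpT, funext hpe⟩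
  rw [hpe, hpe]
  exact hn hij

theorem Set.Infinite.exists_strictMono_tuple_gt {S : Set ℕ} (hS : S.Infinite) {k : ℕ}
    (a : Fin k → ℕ) : ∃ b : Fin k → ℕ, StrictMono b ∧ (∀ i, b i ∈ S) ∧ ∀ i j, a i < b j := by
  set T := S \ ⋃ i, Set.Iic (a i)
  have hT : T.Infinite := hS.sdiff (Set.finite_iUnion fun _ => Set.finite_Iic _)
  refine ⟨fun i => Nat.nth (· ∈ T) i,
    fun i j hij => Nat.nth_strictMono hT hij, fun i => (Nat.nth_mem_of_infinite hT i).1,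
    fun i j => ?_⟩
  have := (Nat.nth_mem_of_infinite hT j).2
  simp only [Set.mem_iUnion, Set.mem_Iic, not_exists, not_le] at this
  exact this i

theorem Fin.strictMono_append {k l : ℕ} {a : Fin k → ℕ} {b : Fin l → ℕ} (ha : StrictMono a)
    (hb : StrictMono b) (hab : ∀ i j, a i < b j) : StrictMono (Fin.append a b) := by
  intro i j hij
  induction i using Fin.addCases <;> induction j using Fin.addCases <;>
    simp only [Fin.append_left, Fin.append_right]
  · exact ha ((Fin.strictMono_castAdd l).lt_iff_lt.mp hij)
  · exact hab _ _
  · simp [Fin.lt_def] at hij; omega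
  · exact hb ((Fin.natAdd_lt_natAdd_iff k).mp hij)

theorem exists_infinite_monochromatic {κ : Type*} [Finite κ] (r : ℕ) :
    ∀ (C : (Fin r → ℕ) → κ) (S : Set ℕ), S.Infinite →
      ∃ T ⊆ S, T.Infinite ∧ ∃ c, ∀ w : Fin r → ℕ, StrictMono w → (∀ i, w i ∈ T) → C w = c := by
  induction r with
  | zero =>
    intro C S hS
    exact ⟨S, subset_rfl, hS, C finZeroElim, fun w _ _ => congrArg C (funext finZeroElim)⟩
  | succ r ih =>
    intro C S hS
    have step : ∀ U : {U : Set ℕ // U.Infinite}, ∃ (V : {V : Set ℕ // V.Infinite}) (a : ℕ) (c : κ),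
        a ∈ U.1 ∧ V.1 ⊆ U.1 ∧ (∀ x ∈ V.1, a < x) ∧
        ∀ w : Fin r → ℕ, StrictMono w → (∀ i, w i ∈ V.1) → C (Fin.cons a w) = c := by
      rintro ⟨U, hU⟩
      obtain ⟨a, ha⟩ := hU.nonempty
      obtain ⟨V, hVU, hV, c, hc⟩ :=
        ih (fun w => C (Fin.cons a w)) (U \ Set.Iic a) (hU.sdiff (Set.finite_Iic a))
      exact ⟨⟨V, hV⟩, a, c, ha, fun x hx => (hVU hx).1, fun x hx => not_le.mp (hVU hx).2, hc⟩
    choose next a c ha hsub hlt hc using step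
    let U : ℕ → {U : Set ℕ // U.Infinite} := fun n => next^[n] ⟨S, hS⟩
    have hU_succ : ∀ n, U (n + 1) = next (U n) := fun n => Function.iterate_succ_apply' _ _ _
    have hU_anti : Antitone fun n => (U n).1 :=
      antitone_nat_of_succ_le fun n => by rw [hU_succ]; exact hsub _
    let b : ℕ → ℕ := fun n => a (U n)
    have hb_mem : ∀ m n, m < n → b n ∈ (next (U m)).1 := fun m n hmn =>
      hU_succ m ▸ hU_anti hmn (ha _)
    have hb : StrictMono b := fun m n hmn => hlt _ _ (hb_mem m n hmn)
    obtain ⟨c₀, hc₀⟩ := Finite.exists_infinite_fiber fun n => c (U n)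
    have hfib : {n | c (U n) = c₀}.Infinite := Set.infinite_coe_iff.mp hc₀
    refine ⟨b '' {n | c (U n) = c₀}, ?_, hfib.image hb.injective.injOn, c₀, fun w hw hwT => ?_⟩
    · rintro _ ⟨n, -, rfl⟩
      exact hU_anti (Nat.zero_le n) (ha _)
    obtain ⟨p, hp, hpT, rfl⟩ := hb.exists_comp_eq_of_forall_mem_image hw hwT
    have hcons : Fin.cons (b (p 0)) (Fin.tail (b ∘ p)) = b ∘ p := Fin.cons_self_tail (b ∘ p)
    rw [← hcons]
    exact (hc _ _ (fun i j hij => hw (Fin.succ_lt_succ_iff.mpr hij))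
      fun i => hb_mem _ _ (hp (Fin.succ_pos i))).trans (hpT 0)

section Interlacing

variable {M : Type*} [PseudoMetricSpace M] {k : ℕ}

/- Separated tuples are joined by a chain of `k` interlacing steps, the `j`-th link being the
window of length `k` starting at position `j` of the concatenation of `a` and `b`. -/
theorem dist_le_mul_of_interlace {f : (Fin k → ℕ) → M} {δ : ℝ}
    (hf : ∀ nb mb : Fin k → ℕ, StrictMono nb → StrictMono mb → Interlace nb mb →
      dist (f nb) (f mb) ≤ δ)
    {a b : Fin k → ℕ} (ha : StrictMono a) (hb : StrictMono b) (hab : ∀ i j, a i < b j) :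
    dist (f a) (f b) ≤ k * δ := by
  let s : ℕ → ℕ := fun p => if h : p < k + k then Fin.append a b ⟨p, h⟩ else 0
  have hs : ∀ p p', p < p' → p' < k + k → s p < s p' := fun p p' hpp' hp' => by
    simp only [s, dif_pos hp', dif_pos (hpp'.trans hp')]
    exact Fin.strictMono_append ha hb hab hpp'
  let q : ℕ → Fin k → ℕ := fun j i => s (j + i)
  have hq : ∀ j < k, StrictMono (q j) := fun j hj i i' hii' => hs _ _ (by omega) (by omega)
  have hq₀ : q 0 = a := funext fun i => by
    simp only [q, s, zero_add, dif_pos (show (i : ℕ) < k + k by omega)]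
    exact Fin.append_left a b i
  have hqk : q k = b := funext fun i => by
    simp only [q, s, dif_pos (show k + i < k + k by omega)]
    exact Fin.append_right a b i
  have hstep : ∀ j < k, dist (f (q j)) (f (q (j + 1))) ≤ δ := fun j hj => by
    refine hf _ _ (hq j hj) ?_ (Or.inl ⟨fun i => (hs _ _ (by omega) (by omega)).le, ?_⟩)
    · exact fun i i' hii' => hs _ _ (by omega) (by omega)
    · intro i i' hii'
      simp only [q, show j + 1 + i = j + i' by omega, le_refl]
  simpa [hq₀, hqk] using dist_le_range_sum_of_dist_le (f := f ∘ q) (d := fun _ => δ) k (hstep _)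

theorem exists_infinite_dist_mem_Ico {f : (Fin k → ℕ) → M} {N : ℕ}
    (hN : ∀ a b : Fin k → ℕ, StrictMono a → StrictMono b → (∀ i j, a i < b j) →
      dist (f a) (f b) ≤ N) :
    ∃ 𝕄 : Set ℕ, 𝕄.Infinite ∧ ∃ v : ℕ, ∀ a b : Fin k → ℕ, StrictMono a → StrictMono b →
      (∀ i, a i ∈ 𝕄) → (∀ i, b i ∈ 𝕄) → (∀ i j, a i < b j) →
        dist (f a) (f b) ∈ Set.Ico (v : ℝ) (v + 1) := by
  let C : (Fin (k + k) → ℕ) → Fin (N + 1) := fun w =>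
    ⟨min ⌊dist (f (w ∘ Fin.castAdd k)) (f (w ∘ Fin.natAdd k))⌋₊ N,
      Nat.lt_succ_of_le (min_le_right _ _)⟩
  obtain ⟨𝕄, -, h𝕄, c, hc⟩ := exists_infinite_monochromatic (k + k) C Set.univ Set.infinite_univ
  refine ⟨𝕄, h𝕄, c, fun a b ha hb ha𝕄 hb𝕄 hab => ?_⟩
  have hw𝕄 : ∀ i, Fin.append a b i ∈ 𝕄 := Fin.addCases
    (fun i => by rw [Fin.append_left]; exact ha𝕄 i) (fun i => by rw [Fin.append_right]; exact hb𝕄 i)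
  have hC := congrArg Fin.val (hc _ (Fin.strictMono_append ha hb hab) hw𝕄)
  have hleft : Fin.append a b ∘ Fin.castAdd k = a := funext (Fin.append_left a b)
  have hright : Fin.append a b ∘ Fin.natAdd k = b := funext (Fin.append_right a b)
  simp only [C, hleft, hright] at hC
  rw [min_eq_left (Nat.floor_le_of_le (hN a b ha hb hab))] at hC
  exact ⟨hC ▸ Nat.floor_le dist_nonneg, hC ▸ Nat.lt_floor_add_one _⟩

end Interlacing

theorem PropertyQED.exists_infinite_subset {M : Type*} [PseudoMetricSpace M] {ε δ : ℝ}
    (h : PropertyQED M ε δ) {S : Set ℕ} (hS : S.Infinite) {k : ℕ} (f : (Fin k → ℕ) → M)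
    (hf : ∀ nb mb : Fin k → ℕ, StrictMono nb → StrictMono mb → (∀ i, nb i ∈ S) →
      (∀ i, mb i ∈ S) → Interlace nb mb → dist (f nb) (f mb) ≤ δ) :
    ∃ T ⊆ S, T.Infinite ∧ ∀ nb mb : Fin k → ℕ, StrictMono nb → StrictMono mb →
      (∀ i, nb i ∈ T) → (∀ i, mb i ∈ T) → (∀ i j, nb i < mb j) → dist (f nb) (f mb) ≤ ε := by
  have he : StrictMono (Nat.nth (· ∈ S)) := Nat.nth_strictMono hS
  have heS : ∀ n, Nat.nth (· ∈ S) n ∈ S := Nat.nth_mem_of_infinite hS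
  obtain ⟨T, hT, hTε⟩ := h k (fun nb => f (Nat.nth (· ∈ S) ∘ nb)) fun nb mb hn hm hnm =>
    hf _ _ (he.comp hn) (he.comp hm) (fun i => heS _) (fun i => heS _)
      (hnm.comp_monotone he.monotone)
  refine ⟨Nat.nth (· ∈ S) '' T, Set.image_subset_iff.mpr fun n _ => heS n,
    hT.image he.injective.injOn, fun nb mb hn hm hnT hmT hnm => ?_⟩
  obtain ⟨pn, hpn, hpnT, rfl⟩ := he.exists_comp_eq_of_forall_mem_image hn hnT
  obtain ⟨pm, hpm, hpmT, rfl⟩ := he.exists_comp_eq_of_forall_mem_image hm hmT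
  exact hTε pn pm hpn hpm hpnT hpmT fun i j => he.lt_iff_lt.mp (hnm i j)

section SeparatingMap

variable {X M : Type*} [SeminormedAddCommGroup X] [PseudoMetricSpace M]
  {ε δ R : ℝ} {g : X → M}

theorem PropertyQED.exists_dist_notMem_Icc (hM : PropertyQED M ε δ)
    (hg_le : ∀ x y : X, ‖x‖ ≤ R + 1 → ‖y‖ ≤ R + 1 → dist x y ≤ 1 → dist (g x) (g y) ≤ δ)
    (hg_lt : ∀ x y : X, ‖x‖ ≤ R + 1 → ‖y‖ ≤ R + 1 → dist x y ∈ Set.Icc R (R + 1) →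
      ε < dist (g x) (g y))
    {S : Set ℕ} (hS : S.Infinite) {k : ℕ} (h : (Fin k → ℕ) → X)
    (h_norm : ∀ nb, StrictMono nb → (∀ i, nb i ∈ S) → ‖h nb‖ ≤ R + 1)
    (h_interlace : ∀ nb mb : Fin k → ℕ, StrictMono nb → StrictMono mb → (∀ i, nb i ∈ S) →
      (∀ i, mb i ∈ S) → Interlace nb mb → dist (h nb) (h mb) ≤ 1) :
    ∃ a b : Fin k → ℕ, StrictMono a ∧ StrictMono b ∧ (∀ i, a i ∈ S) ∧ (∀ i, b i ∈ S) ∧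
      (∀ i j, a i < b j) ∧ dist (h a) (h b) ∉ Set.Icc R (R + 1) := by
  obtain ⟨T, hTS, hT, hTε⟩ := hM.exists_infinite_subset hS (g ∘ h)
    fun nb mb hn hm hnS hmS hnm =>
      hg_le _ _ (h_norm nb hn hnS) (h_norm mb hm hmS) (h_interlace nb mb hn hm hnS hmS hnm)
  obtain ⟨a, ha, haT, -⟩ := hT.exists_strictMono_tuple_gt fun _ : Fin k => 0
  obtain ⟨b, hb, hbT, hab⟩ := hT.exists_strictMono_tuple_gt a
  have haS : ∀ i, a i ∈ S := fun i => hTS (haT i)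
  have hbS : ∀ i, b i ∈ S := fun i => hTS (hbT i)
  refine ⟨a, b, ha, hb, haS, hbS, hab, fun hwindow => ?_⟩
  exact (hg_lt _ _ (h_norm a ha haS) (h_norm b hb hbS) hwindow).not_ge
    (hTε a b ha hb haT hbT hab)

theorem PropertyQED.of_separating_map [NormedSpace ℝ X] (hM : PropertyQED M ε δ) (hR : 0 ≤ R)
    (hg_le : ∀ x y : X, ‖x‖ ≤ R + 1 → ‖y‖ ≤ R + 1 → dist x y ≤ 1 → dist (g x) (g y) ≤ δ)
    (hg_lt : ∀ x y : X, ‖x‖ ≤ R + 1 → ‖y‖ ≤ R + 1 → dist x y ∈ Set.Icc R (R + 1) →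
      ε < dist (g x) (g y)) :
    PropertyQED X (R + 1) 1 := by
  intro k f hf
  obtain ⟨𝕄, h𝕄, v, hv⟩ := exists_infinite_dist_mem_Ico (f := f) (N := k)
    fun a b ha hb hab => by simpa using dist_le_mul_of_interlace hf ha hb hab
  by_cases hvR : (v : ℝ) ≤ R
  · exact ⟨𝕄, h𝕄, fun a b ha hb ha𝕄 hb𝕄 hab => by linarith [(hv a b ha hb ha𝕄 hb𝕄 hab).2]⟩
  exfalso
  push Not at hvR
  obtain ⟨b₀, hb₀, hb₀𝕄, -⟩ := h𝕄.exists_strictMono_tuple_gt fun _ : Fin k => 0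
  set S := 𝕄 \ ⋃ i, Set.Iic (b₀ i)
  have hS : S.Infinite := h𝕄.sdiff (Set.finite_iUnion fun _ => Set.finite_Iic _)
  have hS𝕄 : ∀ nb : Fin k → ℕ, (∀ i, nb i ∈ S) → ∀ i, nb i ∈ 𝕄 := fun nb hnS i => (hnS i).1
  have hS_gt : ∀ m ∈ S, ∀ i, b₀ i < m := fun m hm i =>
    not_le.mp fun h => hm.2 (Set.mem_iUnion.mpr ⟨i, h⟩)
  have hv₀ : (0 : ℝ) < v := hR.trans_lt hvR
  set s := R / v
  have hsv : s * v = R := div_mul_cancel₀ R hv₀.ne'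
  have hs₀ : 0 ≤ s := by positivity
  have hs₁ : s ≤ 1 := (div_le_one hv₀).mpr hvR.le
  let h : (Fin k → ℕ) → X := fun nb => s • (f nb - f b₀)
  have hdist : ∀ nb mb, dist (h nb) (h mb) = s * dist (f nb) (f mb) := fun nb mb => by
    rw [dist_smul₀, dist_sub_right, Real.norm_of_nonneg hs₀]
  have hnorm : ∀ nb, StrictMono nb → (∀ i, nb i ∈ S) → ‖h nb‖ ≤ R + 1 := fun nb hn hnS => by
    have hlt := (hv b₀ nb hb₀ hn hb₀𝕄 (hS𝕄 nb hnS) fun i j => hS_gt _ (hnS j) i).2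
    calc ‖h nb‖ = s * dist (f b₀) (f nb) := by
          rw [norm_smul, Real.norm_of_nonneg hs₀, ← dist_eq_norm, dist_comm]
      _ ≤ s * (v + 1) := mul_le_mul_of_nonneg_left hlt.le hs₀
      _ ≤ R + 1 := by linarith
  obtain ⟨a, b, ha, hb, haS, hbS, hab, hwindow⟩ := hM.exists_dist_notMem_Icc hg_le hg_lt hS h
    hnorm fun nb mb hn hm _ _ hnm => by
      rw [hdist]
      exact mul_le_one₀ hs₁ dist_nonneg (hf nb mb hn hm hnm)
  obtain ⟨hv_le, hv_lt⟩ := hv a b ha hb (hS𝕄 a haS) (hS𝕄 b hbS) hab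
  rw [hdist] at hwindow
  exact hwindow ⟨by nlinarith, by nlinarith⟩

end SeparatingMap

theorem exactComp_le_dist {M N : Type*} [PseudoMetricSpace M] [PseudoMetricSpace N]
    (f : M → N) (x y : M) : exactComp f (dist x y) ≤ dist (f x) (f y) :=
  csInf_le ⟨0, by rintro r ⟨x, y, -, rfl⟩; exact dist_nonneg⟩ ⟨x, y, rfl, rfl⟩

section UnitBall

variable {X Y : Type*} [SeminormedAddCommGroup X] [NormedSpace ℝ X] [PseudoMetricSpace Y]
  {φ : closedBall (0 : X) 1 → Y}

/- Pushing `v` away from `u` along the line through them gives a point at distance exactly `t`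
from `u` and close to `v`, so by uniform continuity the compression at `t` survives, halved,
at all distances slightly below `t`. -/
theorem exists_half_exactComp_lt_dist (hφ : UniformContinuous φ) {t : ℝ} (ht₀ : 0 < t)
    (ht₁ : t < 1) (hρ : 0 < exactComp φ t) :
    ∃ η > 0, ∀ u v : closedBall (0 : X) 1, ‖(v : X)‖ ≤ t → dist u v ∈ Set.Icc (t - η) t →
      exactComp φ t / 2 < dist (φ u) (φ v) := by
  obtain ⟨δ, hδ, hφδ⟩ := Metric.uniformContinuous_iff.mp hφ _ (half_pos hρ)
  refine ⟨min δ (min (1 - t) t) / 2, by positivity, fun u v hv ⟨hduv, hduv'⟩ => ?_⟩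
  have hη : min δ (min (1 - t) t) / 2 < min δ (min (1 - t) t) := half_lt_self (by positivity)
  have hη_le := min_le_right δ (min (1 - t) t)
  have hη_δ := min_le_left δ (min (1 - t) t)
  have hd : 0 < dist u v := by linarith [min_le_right (1 - t) t]
  set w : X := AffineMap.lineMap (u : X) v (t / dist u v)
  have hwu : dist w u = t := by
    rw [dist_lineMap_left, Real.norm_of_nonneg (by positivity), ← Subtype.dist_eq,
      div_mul_cancel₀ _ hd.ne']
  have hwv : dist w v = t - dist u v := by
    rw [dist_lineMap_right, ← Subtype.dist_eq, Real.norm_of_nonpos, neg_sub, sub_mul,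
      div_mul_cancel₀ _ hd.ne', one_mul]
    linarith [(one_le_div hd).mpr hduv']
  have hw : w ∈ closedBall (0 : X) 1 := by
    rw [mem_closedBall_zero_iff]
    calc ‖w‖ ≤ ‖(v : X)‖ + dist w v := by
          rw [dist_eq_norm]; linarith [norm_le_insert' w (v : X), norm_sub_rev w (v : X)]
      _ ≤ 1 := by linarith [min_le_left (1 - t) t]
  have hclose : dist (φ ⟨w, hw⟩) (φ v) < exactComp φ t / 2 :=
    hφδ (by rw [Subtype.dist_eq]; dsimp only; linarith)
  have hfar : exactComp φ t ≤ dist (φ ⟨w, hw⟩) (φ u) := by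
    simpa [Subtype.dist_eq, hwu] using exactComp_le_dist φ ⟨w, hw⟩ u
  linarith [dist_triangle (φ ⟨w, hw⟩) (φ v) (φ u), dist_comm (φ u) (φ v)]

theorem exists_separating_map (hφ : UniformContinuous φ) {t : ℝ} (ht₀ : 0 < t) (ht₁ : t < 1)
    (hρ : 0 < exactComp φ t) {a : ℝ} (ha : 0 < a) :
    ∃ R ≥ (0 : ℝ), ∃ g : X → Y,
      (∀ x y : X, ‖x‖ ≤ R + 1 → ‖y‖ ≤ R + 1 → dist x y ≤ 1 → dist (g x) (g y) ≤ a) ∧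
      (∀ x y : X, ‖x‖ ≤ R + 1 → ‖y‖ ≤ R + 1 → dist x y ∈ Set.Icc R (R + 1) →
        exactComp φ t / 2 < dist (g x) (g y)) := by
  classical
  obtain ⟨η, hη, hnear⟩ := exists_half_exactComp_lt_dist hφ ht₀ ht₁ hρ
  obtain ⟨δ, hδ, hφδ⟩ := Metric.uniformContinuous_iff.mp hφ a ha
  obtain ⟨n, hn⟩ := exists_nat_one_div_lt (lt_min hη hδ)
  have hn₀ : (0 : ℝ) < n + 1 := by positivity
  set s := t / (n + 1)
  have hs₀ : 0 < s := by positivity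
  have hs : s * (n + 1) = t := div_mul_cancel₀ t hn₀.ne'
  have hs₁ : s < 1 / (n + 1) := div_lt_div_of_pos_right ht₁ hn₀
  have hsx : ∀ x : X, ‖x‖ ≤ n + 1 → ‖s • x‖ ≤ t := fun x hx => by
    rw [norm_smul, Real.norm_of_nonneg hs₀.le, ← hs]
    exact mul_le_mul_of_nonneg_left hx hs₀.le
  have hmem : ∀ x : X, ‖x‖ ≤ n + 1 → s • x ∈ closedBall (0 : X) 1 := fun x hx =>
    mem_closedBall_zero_iff.mpr ((hsx x hx).trans ht₁.le)
  let g : X → Y := fun x =>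
    if hx : s • x ∈ closedBall (0 : X) 1 then φ ⟨s • x, hx⟩
    else φ ⟨0, mem_closedBall_self zero_le_one⟩
  have hg : ∀ x (hx : ‖x‖ ≤ n + 1), g x = φ ⟨s • x, hmem x hx⟩ := fun x hx => dif_pos _
  have hdist : ∀ x y : X, dist (s • x) (s • y) = s * dist x y := fun x y => by
    rw [dist_smul₀, Real.norm_of_nonneg hs₀.le]
  refine ⟨n, n.cast_nonneg, g, fun x y hx hy hxy => ?_, fun x y hx hy ⟨hRxy, hxyR⟩ => ?_⟩
  · rw [hg x hx, hg y hy]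
    refine (hφδ ?_).le
    rw [Subtype.dist_eq, hdist]
    nlinarith [min_le_right η δ]
  · rw [hg x hx, hg y hy]
    refine hnear _ _ (hsx y hy) ?_
    rw [Subtype.dist_eq, hdist]
    constructor <;> nlinarith [min_le_left η δ]

end UnitBall

section Scaling

variable {X : Type*} [SeminormedAddCommGroup X] [NormedSpace ℝ X]

theorem PropertyQED.mul {ε δ : ℝ} (h : PropertyQED X ε δ) {c : ℝ} (hc : 0 < c) :
    PropertyQED X (c * ε) (c * δ) := by
  have hdist : ∀ x y : X, dist (c⁻¹ • x) (c⁻¹ • y) = c⁻¹ * dist x y := fun x y => by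
    rw [dist_smul₀, Real.norm_of_nonneg (inv_nonneg.mpr hc.le)]
  intro k f hf
  obtain ⟨𝕄, h𝕄, hε⟩ := h k (fun nb => c⁻¹ • f nb) fun nb mb hn hm hnm => by
    rw [hdist, inv_mul_le_iff₀ hc]
    exact hf nb mb hn hm hnm
  refine ⟨𝕄, h𝕄, fun nb mb hn hm hn𝕄 hm𝕄 hnm => ?_⟩
  have := hε nb mb hn hm hn𝕄 hm𝕄 hnm
  rwa [hdist, inv_mul_le_iff₀ hc] at this

theorem propertyQ_of_propertyQED {ε : ℝ} (hε : 0 < ε) (h : PropertyQED X ε 1) : PropertyQ X :=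
  ⟨ε⁻¹, inv_pos.mpr hε, fun ε' hε' => by
    have := h.mul (div_pos hε' hε)
    rwa [div_mul_cancel₀ ε' hε.ne', mul_one, div_eq_inv_mul] at this⟩

end Scaling

theorem propertyQ_of_uniformContinuous_on_ball_general
    {X Y : Type*} [NormedAddCommGroup X] [NormedSpace ℝ X]
    [NormedAddCommGroup Y] [NormedSpace ℝ Y]
    (hY : PropertyQ Y) (φ : Metric.closedBall (0 : X) 1 → Y)
    (hφ : UniformContinuous φ)
    (ht : ∃ t ∈ Set.Ioo (0 : ℝ) 1, 0 < exactComp φ t) :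
    PropertyQ X := by
  obtain ⟨t, ⟨ht₀, ht₁⟩, hρ⟩ := ht
  obtain ⟨c, hc, hQ⟩ := hY
  have hε : 0 < exactComp φ t / 2 := half_pos hρ
  obtain ⟨R, hR, g, hg_le, hg_lt⟩ := exists_separating_map hφ ht₀ ht₁ hρ (mul_pos hc hε)
  exact propertyQ_of_propertyQED (by linarith)
    ((hQ _ hε).of_separating_map hR hg_le hg_lt)

/-- If Y has Property 𝒬 and there is a uniformly continuous map φ : B_X → Y with
ρ̄_φ(t) > 0 for some t ∈ (0,1), then X has Property 𝒬. -/
theorem propertyQ_of_uniformContinuous_on_ball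
    {X Y : Type*} [NormedAddCommGroup X] [NormedSpace ℝ X] [CompleteSpace X]
    [NormedAddCommGroup Y] [NormedSpace ℝ Y] [CompleteSpace Y]
    (hY : PropertyQ Y) (φ : Metric.closedBall (0 : X) 1 → Y)
    (hφ : UniformContinuous φ)
    (ht : ∃ t ∈ Set.Ioo (0 : ℝ) 1, 0 < exactComp φ t) :
    PropertyQ X :=
  propertyQ_of_uniformContinuous_on_ball_general hY φ hφ ht
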